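/- Proposition 2 (Myopic effect of biased exploration): If δ_b > 0 and for every target state x in the closer set X, P(x_t, a_b, x) ≥ max over x̄ ∈ X of the average (1/|A|)·∑_a P(x_t, a, x̄), then the probability of reaching X in one step under the (ε,δ)-greedy policy is at least that under the ε-greedy policy; i.e., ∑_{x∈X} ∑_a μ_b(a) P(x_t,a,x) ≥ ∑_{x∈X} ∑_a μ_g(a) P(x_t,a,x). -/

import Mathlib

/-!
The `(ε,δ)`-greedy policy is the `ε`-greedy policy with mass `δ_b` moved from the uniform part
onto `a_b`: `μ_b = μ_g + δ_b (𝟙_{a_b} - 1/|A|)`. So for each `x` the probability of reaching `x`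
grows by `δ_b (P(a_b, x) - (1/|A|) ∑ₐ P(a, x))`, which the assumption with `x̄ = x` makes
nonnegative.
-/

open Finset

section UniformShift

variable {A : Type*} [Fintype A] [DecidableEq A]

theorem sum_mul_add_shift_from_uniform (μ f : A → ℝ) (b : A) (c : ℝ) :
    ∑ a, (μ a + c * ((if a = b then 1 else 0) - 1 / Fintype.card A)) * f a
      = ∑ a, μ a * f a + c * (f b - (∑ a, f a) / Fintype.card A) := by
  simp only [add_mul, sum_add_distrib, mul_assoc, ← mul_sum, sub_mul, sum_sub_distrib, ite_mul,
    one_mul, zero_mul, sum_ite_eq', mem_univ, if_true, one_div, inv_mul_eq_div, sum_div]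

theorem sum_mul_le_sum_mul_shift_from_uniform (μ f : A → ℝ) {b : A} {c : ℝ} (hc : 0 ≤ c)
    (hb : (∑ a, f a) / Fintype.card A ≤ f b) :
    ∑ a, μ a * f a
      ≤ ∑ a, (μ a + c * ((if a = b then 1 else 0) - 1 / Fintype.card A)) * f a := by
  rw [sum_mul_add_shift_from_uniform]
  exact le_add_of_nonneg_right (mul_nonneg hc (sub_nonneg.mpr hb))

end UniformShift

theorem stmt5_general {A S : Type*} [Fintype A] [DecidableEq A]
    (astar ab : A) (hne : astar ≠ ab)
    (P : A → S → ℝ) (X : Finset S)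
    (δb δe : ℝ) (hδb : 0 < δb)
    (ε : ℝ) (hε : ε = δb + δe)
    (μg μb : A → ℝ)
    (hμg : ∀ a, μg a = if a = astar then 1 - ε + ε / (Fintype.card A : ℝ)
      else ε / (Fintype.card A : ℝ))
    (hμb : ∀ a, μb a = if a = astar then 1 - ε + δe / (Fintype.card A : ℝ)
      else if a = ab then δb + δe / (Fintype.card A : ℝ)
      else δe / (Fintype.card A : ℝ))
    (hdom : ∀ x ∈ X, ∀ xbar ∈ X,
      (∑ a : A, P a xbar) / (Fintype.card A : ℝ) ≤ P ab x) :
    ∑ x ∈ X, ∑ a : A, μg a * P a x ≤ ∑ x ∈ X, ∑ a : A, μb a * P a x := by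
  have hshift : ∀ a, μb a
      = μg a + δb * ((if a = ab then 1 else 0) - 1 / Fintype.card A) := by
    intro a
    rw [hμg, hμb, hε]
    split_ifs with h₁ h₂ h₂
    · exact absurd (h₁.symm.trans h₂) hne
    all_goals ring
  refine sum_le_sum fun x hx => ?_
  simp only [hshift]
  exact sum_mul_le_sum_mul_shift_from_uniform μg (P · x) hδb.le (hdom x hx x hx)

theorem stmt5 {A S : Type*} [Fintype A] [DecidableEq A] [Fintype S] (hcard : 2 ≤ Fintype.card A)
    (astar ab : A) (hne : astar ≠ ab)
    (P : A → S → ℝ) (X : Finset S) (hX : X.Nonempty)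
    (δb δe : ℝ) (hδb : 0 < δb) (hδe : 0 ≤ δe)
    (ε : ℝ) (hε : ε = δb + δe) (hε1 : ε ≤ 1)
    (μg μb : A → ℝ)
    (hμg : ∀ a, μg a = if a = astar then 1 - ε + ε / (Fintype.card A : ℝ)
      else ε / (Fintype.card A : ℝ))
    (hμb : ∀ a, μb a = if a = astar then 1 - ε + δe / (Fintype.card A : ℝ)
      else if a = ab then δb + δe / (Fintype.card A : ℝ)
      else δe / (Fintype.card A : ℝ))
    (hdom : ∀ x ∈ X, ∀ xbar ∈ X,
      (∑ a : A, P a xbar) / (Fintype.card A : ℝ) ≤ P ab x) :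
    ∑ x ∈ X, ∑ a : A, μg a * P a x ≤ ∑ x ∈ X, ∑ a : A, μb a * P a x :=
  stmt5_general astar ab hne P X δb δe hδb ε hε μg μb hμg hμb hdom
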